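/- arXiv:2301.11701 — 4 statements merged into one kernel-verified Lean document; each statement's English description precedes it below -/
import Mathlib

section
/- Let τ ≤ ‖y‖ ≤ 1 − τ with τ > 0. If z has the arcsine density 1/(π√(1−z²)) on (−1,1) and r is independent and uniform on [−1,0], then P(|z‖y‖ + r| < τ) = τ. -/
open MeasureTheory ProbabilityTheory
open scoped ENNReal

/-- Inner slice computation: the length of the set of `t ∈ [-1,0]` with `|x + t| < τ`. -/
lemma aux_slice (τ x : ℝ) (hτ : 0 < τ) (hx : |x| ≤ 1 - τ) :
    (volume.restrict (Set.Icc (-1 : ℝ) 0)) {t : ℝ | |x + t| < τ}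
      = ENNReal.ofReal (min (τ + x) (2 * τ)) := by
  have hset : {t : ℝ | |x + t| < τ} = Set.Ioo (-τ - x) (τ - x) := by
    ext t
    simp only [Set.mem_setOf_eq, Set.mem_Ioo, abs_lt]
    constructor <;> intro h <;> constructor <;> linarith [h.1, h.2]
  have hxl : -1 ≤ |x| - 1 := by nlinarith [abs_nonneg x]
  have hl : (-1 : ℝ) ≤ -τ - x := by
    have := neg_abs_le x
    linarith [abs_le.mp hx]
  rw [hset, Measure.restrict_apply measurableSet_Ioo]
  rcases le_or_gt (τ - x) 0 with hu | hu
  · -- x ≥ τ : full interval inside [-1,0]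
    have hsub : Set.Ioo (-τ - x) (τ - x) ∩ Set.Icc (-1 : ℝ) 0
        = Set.Ioo (-τ - x) (τ - x) := by
      apply Set.inter_eq_left.mpr
      intro t ht
      exact ⟨le_of_lt (lt_of_le_of_lt hl ht.1), le_trans ht.2.le hu⟩
    rw [hsub, Real.volume_Ioo]
    congr 1
    have : min (τ + x) (2 * τ) = 2 * τ := min_eq_right (by linarith)
    rw [this]; ring
  · rcases lt_or_ge (-τ - x) 0 with hl0 | hl0
    · -- |x| < τ : intersection is Ioc (-τ - x) 0
      have hsub : Set.Ioo (-τ - x) (τ - x) ∩ Set.Icc (-1 : ℝ) 0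
          = Set.Ioc (-τ - x) 0 := by
        ext t
        simp only [Set.mem_inter_iff, Set.mem_Ioo, Set.mem_Icc, Set.mem_Ioc]
        constructor
        · rintro ⟨⟨h1, _⟩, ⟨_, h4⟩⟩; exact ⟨h1, h4⟩
        · rintro ⟨h1, h2⟩
          exact ⟨⟨h1, lt_of_le_of_lt h2 hu⟩, ⟨le_of_lt (lt_of_le_of_lt hl h1), h2⟩⟩
      rw [hsub, Real.volume_Ioc]
      congr 1
      have : min (τ + x) (2 * τ) = τ + x := min_eq_left (by linarith)
      rw [this]; ring
    · -- x ≤ -τ : empty intersection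
      have hsub : Set.Ioo (-τ - x) (τ - x) ∩ Set.Icc (-1 : ℝ) 0 = (∅ : Set ℝ) := by
        ext t
        simp only [Set.mem_inter_iff, Set.mem_Ioo, Set.mem_Icc, Set.mem_empty_iff_false,
          iff_false, not_and, and_imp]
        intro h1 _ _ h4
        exact absurd (lt_of_le_of_lt hl0 h1) (not_lt.mpr h4)
      rw [hsub, measure_empty]
      symm
      rw [ENNReal.ofReal_eq_zero]
      exact le_trans (min_le_left _ _) (by linarith)

theorem stmt_4 {Ω : Type*} [MeasureSpace Ω] [IsProbabilityMeasure (ℙ : Measure Ω)]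
    {d : ℕ} (z : Ω → ℝ) (r : Ω → ℝ) (hz : Measurable z) (hr : Measurable r)
    (hzlaw : Measure.map z ℙ
      = (volume.restrict (Set.Ioo (-1 : ℝ) 1)).withDensity
          (fun t => ENNReal.ofReal (1 / (Real.pi * Real.sqrt (1 - t ^ 2)))))
    (hrlaw : Measure.map r ℙ = volume.restrict (Set.Icc (-1 : ℝ) 0))
    (hindep : IndepFun z r ℙ)
    (y : EuclideanSpace ℝ (Fin d)) (τ : ℝ) (hτ : 0 < τ)
    (hy1 : τ ≤ ‖y‖) (hy2 : ‖y‖ ≤ 1 - τ) :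
    (ℙ {ω | |z ω * ‖y‖ + r ω| < τ}).toReal = τ := by
  set a : ℝ := ‖y‖ with ha
  have ha0 : 0 ≤ a := norm_nonneg y
  -- density function
  set f : ℝ → ℝ≥0∞ := fun t => ENNReal.ofReal (1 / (Real.pi * Real.sqrt (1 - t ^ 2)))
    with hf
  have hfmeas : Measurable f := by
    apply ENNReal.measurable_ofReal.comp
    apply Measurable.div measurable_const
    exact (measurable_const.mul ((measurable_const.sub (measurable_id.pow_const 2)).sqrt))
  -- f is even
  have hfeven : ∀ s : ℝ, f (-s) = f s := by
    intro s; simp [hf, neg_pow]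
  -- f vanishes outside Ioo (-1) 1
  have hfzero : ∀ s : ℝ, s ∉ Set.Ioo (-1 : ℝ) 1 → f s = 0 := by
    intro s hs
    have h1 : 1 - s ^ 2 ≤ 0 := by
      simp only [Set.mem_Ioo, not_and_or, not_lt] at hs
      rcases hs with h | h <;> nlinarith
    simp [hf, Real.sqrt_eq_zero_of_nonpos h1]
  -- the slice function
  set h : ℝ → ℝ≥0∞ := fun s => ENNReal.ofReal (min (τ + s * a) (2 * τ)) with hh
  have hhmeas : Measurable h :=
    ENNReal.measurable_ofReal.comp
      ((measurable_const.add (measurable_id.mul_const a)).min measurable_const)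
  -- key symmetry identity
  have hsym : ∀ s : ℝ, h s + h (-s) = ENNReal.ofReal (2 * τ) := by
    intro s
    simp only [hh, neg_mul]
    rcases le_or_gt (τ + s * a) 0 with h1 | h1
    · rw [ENNReal.ofReal_eq_zero.mpr (le_trans (min_le_left _ _) h1), zero_add]
      congr 1
      exact min_eq_right (by linarith)
    · rcases le_or_gt (τ + -(s * a)) 0 with h2 | h2
      · rw [ENNReal.ofReal_eq_zero.mpr (le_trans (min_le_left _ _) h2), add_zero]
        congr 1
        exact min_eq_right (by linarith)
      · rw [min_eq_left (by linarith), min_eq_left (by linarith),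
          ← ENNReal.ofReal_add h1.le h2.le]
        congr 1; ring
  -- the event as a set in the product space
  set S : Set (ℝ × ℝ) := {p : ℝ × ℝ | |p.1 * a + p.2| < τ} with hS
  have hSmeas : MeasurableSet S := by
    have : Continuous fun p : ℝ × ℝ => |p.1 * a + p.2| :=
      ((continuous_fst.mul continuous_const).add continuous_snd).abs
    exact measurableSet_lt (this.measurable) measurable_const
  -- rewrite the probability via the joint law
  have hmap : Measure.map (fun ω => (z ω, r ω)) ℙ
      = (Measure.map z ℙ).prod (Measure.map r ℙ) :=
    (indepFun_iff_map_prod_eq_prod_map_map hz.aemeasurable hr.aemeasurable).mp hindep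
  have step1 : ℙ {ω | |z ω * a + r ω| < τ}
      = ((Measure.map z ℙ).prod (Measure.map r ℙ)) S := by
    rw [← hmap, Measure.map_apply (hz.prodMk hr) hSmeas]
    rfl
  -- Fubini
  have step2 : ((Measure.map z ℙ).prod (Measure.map r ℙ)) S
      = ∫⁻ s, (Measure.map r ℙ) {t : ℝ | |s * a + t| < τ} ∂(Measure.map z ℙ) := by
    rw [Measure.prod_apply hSmeas]; rfl
  -- inner slice
  have step3 : ∀ s : ℝ, s ∈ Set.Ioo (-1 : ℝ) 1 →
      (Measure.map r ℙ) {t : ℝ | |s * a + t| < τ} = h s := by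
    intro s hs
    rw [hrlaw]
    apply aux_slice τ (s * a) hτ
    have hs1 : |s| ≤ 1 := le_of_lt (abs_lt.mpr ⟨hs.1, hs.2⟩)
    have : |s * a| ≤ a := by
      rw [abs_mul, abs_of_nonneg ha0]
      nlinarith [abs_nonneg s]
    linarith
  -- a.e. membership in Ioo
  have hae : ∀ᵐ s ∂(Measure.map z ℙ), s ∈ Set.Ioo (-1 : ℝ) 1 := by
    rw [hzlaw]
    exact (withDensity_absolutelyContinuous _ _).ae_le
      (ae_restrict_mem measurableSet_Ioo)
  have step4 : ∫⁻ s, (Measure.map r ℙ) {t : ℝ | |s * a + t| < τ} ∂(Measure.map z ℙ)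
      = ∫⁻ s, h s ∂(Measure.map z ℙ) := by
    apply lintegral_congr_ae
    filter_upwards [hae] with s hs using step3 s hs
  -- the law is a probability measure
  have hprob : IsProbabilityMeasure (Measure.map z ℙ) :=
    Measure.isProbabilityMeasure_map hz.aemeasurable
  -- total mass of density
  have hmass : ∫⁻ s in Set.Ioo (-1 : ℝ) 1, f s ∂volume = 1 := by
    have := hprob.measure_univ
    rw [hzlaw] at this
    rwa [withDensity_apply _ MeasurableSet.univ, Measure.restrict_univ] at this
  -- express the main integral over volume
  have step5 : ∫⁻ s, h s ∂(Measure.map z ℙ)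
      = ∫⁻ s in Set.Ioo (-1 : ℝ) 1, f s * h s ∂volume := by
    rw [hzlaw, lintegral_withDensity_eq_lintegral_mul _ hfmeas hhmeas]
    rfl
  -- extend to whole line
  have hsupp : Function.support (fun s => f s * h s) ⊆ Set.Ioo (-1 : ℝ) 1 := by
    intro s hs
    by_contra hmem
    exact hs (by simp [hfzero s hmem])
  have hsupp' : Function.support f ⊆ Set.Ioo (-1 : ℝ) 1 := by
    intro s hs
    by_contra hmem
    exact hs (hfzero s hmem)
  have step6 : ∫⁻ s in Set.Ioo (-1 : ℝ) 1, f s * h s ∂volume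
      = ∫⁻ s, f s * h s ∂volume :=
    setLIntegral_eq_of_support_subset hsupp
  have hmass' : ∫⁻ s, f s ∂volume = 1 := by
    rw [← setLIntegral_eq_of_support_subset hsupp']
    exact hmass
  -- symmetry via negation
  have hneg : ∫⁻ s, f s * h s ∂volume = ∫⁻ s, f s * h (-s) ∂volume := by
    have hmp := Measure.measurePreserving_neg (volume : Measure ℝ)
    have := hmp.lintegral_comp (f := fun s => f s * h s) (hfmeas.mul hhmeas)
    rw [← this]
    apply lintegral_congr
    intro s
    show f (-s) * h (-s) = f s * h (-s)
    rw [hfeven s]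
  -- combine: 2 * I = ofReal (2τ)
  set I : ℝ≥0∞ := ∫⁻ s, f s * h s ∂volume with hIdef
  have hdouble : I + I = ENNReal.ofReal (2 * τ) := by
    nth_rewrite 1 [hneg]
    have hm : Measurable fun s : ℝ => f s * h (-s) := hfmeas.mul (hhmeas.comp measurable_neg)
    rw [hIdef, ← lintegral_add_left hm]
    have heq : ∀ s : ℝ, f s * h (-s) + f s * h s = f s * ENNReal.ofReal (2 * τ) := by
      intro s; rw [← mul_add, add_comm (h (-s)), hsym s]
    rw [lintegral_congr heq, lintegral_mul_const _ hfmeas, hmass', one_mul]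
  have hfin : I ≠ ⊤ := by
    intro hc
    rw [hc] at hdouble
    simp at hdouble
    exact ENNReal.mul_ne_top (by norm_num) ENNReal.ofReal_ne_top hdouble.symm
  have hItoReal : I.toReal + I.toReal = 2 * τ := by
    rw [← ENNReal.toReal_add hfin hfin, hdouble, ENNReal.toReal_ofReal (by linarith)]
  calc (ℙ {ω | |z ω * ‖y‖ + r ω| < τ}).toReal
      = I.toReal := by
        rw [← ha, step1, step2, step4, step5, step6]
    _ = τ := by linarith
end

section
/- Let a be uniform on the unit circle S¹ ⊂ ℝ² and r be independent and uniform on [0,1]. Fix τ ∈ (0,1) and y ∈ ℝ² with ‖y‖ ≤ 1 − τ. Then P(|⟨a, y − r a⟩| < τ) = τ. -/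
open MeasureTheory ProbabilityTheory
open scoped RealInnerProductSpace ENNReal

/-- Measure of `{t : |x - t| < τ}` under uniform measure on `[0,1]`. -/
lemma aux_vol_stmt8 (τ x : ℝ) :
    (volume.restrict (Set.Icc (0:ℝ) 1)) {t | |x - t| < τ} =
      ENNReal.ofReal (min (x + τ) 1 - max (x - τ) 0) := by
  have hset : {t : ℝ | |x - t| < τ} = Set.Ioo (x - τ) (x + τ) := by
    ext t
    simp only [Set.mem_setOf_eq, Set.mem_Ioo, abs_sub_lt_iff]
    constructor
    · rintro ⟨h1, h2⟩; exact ⟨by linarith, by linarith⟩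
    · rintro ⟨h1, h2⟩; exact ⟨by linarith, by linarith⟩
  rw [hset, Measure.restrict_apply measurableSet_Ioo]
  apply le_antisymm
  · calc volume (Set.Ioo (x - τ) (x + τ) ∩ Set.Icc 0 1)
        ≤ volume (Set.Icc (max (x - τ) 0) (min (x + τ) 1)) := by
          apply measure_mono
          rintro t ⟨⟨h1, h2⟩, h3, h4⟩
          exact ⟨max_le h1.le h3, le_min h2.le h4⟩
      _ = ENNReal.ofReal (min (x + τ) 1 - max (x - τ) 0) := Real.volume_Icc
  · calc ENNReal.ofReal (min (x + τ) 1 - max (x - τ) 0)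
        = volume (Set.Ioo (max (x - τ) 0) (min (x + τ) 1)) := Real.volume_Ioo.symm
      _ ≤ volume (Set.Ioo (x - τ) (x + τ) ∩ Set.Icc 0 1) := by
          apply measure_mono
          rintro t ⟨h1, h2⟩
          have ha1 : x - τ ≤ max (x - τ) 0 := le_max_left _ _
          have ha2 : (0:ℝ) ≤ max (x - τ) 0 := le_max_right _ _
          have hb1 : min (x + τ) 1 ≤ x + τ := min_le_left _ _
          have hb2 : min (x + τ) 1 ≤ 1 := min_le_right _ _
          exact ⟨⟨by linarith, by linarith⟩, by linarith, by linarith⟩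

theorem stmt_8 {Ω : Type*} [MeasureSpace Ω] [IsProbabilityMeasure (ℙ : Measure Ω)]
    (a : Ω → EuclideanSpace ℝ (Fin 2)) (r : Ω → ℝ)
    (ha : Measurable a) (hr : Measurable r)
    -- a is uniformly distributed on the unit circle S¹:
    (hsphere : ∀ᵐ ω ∂ℙ, ‖a ω‖ = 1)
    (hrot : ∀ Q : EuclideanSpace ℝ (Fin 2) ≃ₗᵢ[ℝ] EuclideanSpace ℝ (Fin 2),
      Measure.map (fun ω => Q (a ω)) ℙ = Measure.map a ℙ)
    -- r is uniformly distributed on [0,1], independent of a: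
    (hrlaw : Measure.map r ℙ = volume.restrict (Set.Icc (0 : ℝ) 1))
    (hindep : IndepFun a r ℙ)
    (τ : ℝ) (hτ0 : 0 < τ) (hτ1 : τ < 1)
    (y : EuclideanSpace ℝ (Fin 2)) (hy : ‖y‖ ≤ 1 - τ) :
    (ℙ {ω | |⟪a ω, y - r ω • a ω⟫| < τ}).toReal = τ := by
  classical
  set X : Ω → ℝ := fun ω => ⟪a ω, y⟫ with hXdef
  have hX : Measurable X := ha.inner measurable_const
  set F : ℝ → ℝ≥0∞ := fun x => ENNReal.ofReal (min (x + τ) 1 - max (x - τ) 0) with hFdef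
  have hF : Measurable F := by
    apply Measurable.ennreal_ofReal
    exact (((measurable_id.add_const τ).min measurable_const).sub
      ((measurable_id.sub_const τ).max measurable_const))
  -- Step 1: rewrite the event a.e.
  have hAE : {ω | |⟪a ω, y - r ω • a ω⟫| < τ} =ᵐ[ℙ] {ω | |X ω - r ω| < τ} := by
    filter_upwards [hsphere] with ω hω
    have h1 : ⟪a ω, y - r ω • a ω⟫ = X ω - r ω := by
      rw [inner_sub_right, real_inner_smul_right, real_inner_self_eq_norm_sq, hω]
      ring
    show (|_| < τ) = (|_| < τ)
    rw [h1]
  -- Step 2: independence of X and r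
  have hXr : IndepFun X r ℙ := by
    have h := hindep.comp (φ := fun v : EuclideanSpace ℝ (Fin 2) => ⟪v, y⟫) (ψ := id)
      (measurable_id.inner measurable_const) measurable_id
    exact h
  set μX := Measure.map X ℙ with hμX
  have hmap : Measure.map (fun ω => (X ω, r ω)) ℙ = μX.prod (Measure.map r ℙ) :=
    (indepFun_iff_map_prod_eq_prod_map_map hX.aemeasurable hr.aemeasurable).mp hXr
  have hS : MeasurableSet {p : ℝ × ℝ | |p.1 - p.2| < τ} :=
    measurableSet_lt (measurable_fst.sub measurable_snd).abs measurable_const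
  -- Step 3: the probability as an integral against the law of X
  have h1 : ℙ {ω | |X ω - r ω| < τ} = ∫⁻ x, F x ∂μX := by
    rw [show {ω | |X ω - r ω| < τ}
        = (fun ω => (X ω, r ω)) ⁻¹' {p : ℝ × ℝ | |p.1 - p.2| < τ} from rfl,
      ← Measure.map_apply (hX.prodMk hr) hS, hmap, hrlaw, Measure.prod_apply hS]
    exact lintegral_congr fun x => aux_vol_stmt8 τ x
  -- Step 4: the law of X is symmetric
  have hneg : μX = Measure.map (fun x : ℝ => -x) μX := by
    have hQ := hrot (LinearIsometryEquiv.neg ℝ)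
    have hQcoe : (fun ω => (LinearIsometryEquiv.neg ℝ) (a ω)) = fun ω => -(a ω) := rfl
    rw [hQcoe] at hQ
    have hinner : Measurable fun v : EuclideanSpace ℝ (Fin 2) => ⟪v, y⟫ :=
      measurable_id.inner measurable_const
    calc μX = Measure.map (fun v : EuclideanSpace ℝ (Fin 2) => ⟪v, y⟫) (Measure.map a ℙ) := by
          rw [Measure.map_map hinner ha]; rfl
      _ = Measure.map (fun v : EuclideanSpace ℝ (Fin 2) => ⟪v, y⟫)
            (Measure.map (fun ω => -(a ω)) ℙ) := by rw [hQ]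
      _ = Measure.map (fun ω => ⟪-(a ω), y⟫) ℙ :=
          Measure.map_map hinner ha.neg
      _ = Measure.map ((fun x : ℝ => -x) ∘ X) ℙ := by
          congr 1; funext ω; simp [hXdef, inner_neg_left]
      _ = Measure.map (fun x : ℝ => -x) μX := (Measure.map_map measurable_neg hX).symm
  have h2 : ∫⁻ x, F x ∂μX = ∫⁻ x, F (-x) ∂μX := by
    conv_lhs => rw [hneg]
    rw [lintegral_map hF measurable_neg]
  -- Step 5: a.e. bound on X
  have hbnd : ∀ᵐ x ∂μX, |x| ≤ 1 - τ := by
    rw [hμX, ae_map_iff hX.aemeasurable (measurableSet_le measurable_abs measurable_const)]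
    filter_upwards [hsphere] with ω hω
    calc |X ω| ≤ ‖a ω‖ * ‖y‖ := abs_real_inner_le_norm _ _
      _ = ‖y‖ := by rw [hω, one_mul]
      _ ≤ 1 - τ := hy
  -- Step 6: pointwise identity F x + F (-x) = 2τ for |x| ≤ 1 - τ
  have hpt : ∀ x : ℝ, |x| ≤ 1 - τ → F x + F (-x) = ENNReal.ofReal (2 * τ) := by
    intro x hx
    rw [abs_le] at hx
    have hm1 : min (x + τ) 1 = x + τ := min_eq_left (by linarith [hx.2])
    have hm2 : min (-x + τ) 1 = -x + τ := min_eq_left (by linarith [hx.1])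
    simp only [hFdef, hm1, hm2]
    rcases le_total x (-τ) with h | h
    · have e1 : max (x - τ) 0 = 0 := max_eq_right (by linarith)
      have e2 : max (-x - τ) 0 = -x - τ := max_eq_left (by linarith)
      rw [e1, e2, ENNReal.ofReal_of_nonpos (by linarith), zero_add]
      congr 1; ring
    · rcases le_total x τ with h' | h'
      · have e1 : max (x - τ) 0 = 0 := max_eq_right (by linarith)
        have e2 : max (-x - τ) 0 = 0 := max_eq_right (by linarith)
        rw [e1, e2, ← ENNReal.ofReal_add (by linarith) (by linarith)]
        congr 1; ring
      · have e1 : max (x - τ) 0 = x - τ := max_eq_left (by linarith)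
        have e2 : max (-x - τ) 0 = 0 := max_eq_right (by linarith)
        rw [e1, e2]
        rw [show ENNReal.ofReal (-x + τ - 0) = 0 from
          ENNReal.ofReal_of_nonpos (by linarith), add_zero]
        congr 1; ring
  -- Step 7: combine
  have hprob : IsProbabilityMeasure μX := Measure.isProbabilityMeasure_map hX.aemeasurable
  have h3 : (∫⁻ x, F x ∂μX) + (∫⁻ x, F (-x) ∂μX) = ENNReal.ofReal (2 * τ) := by
    rw [← lintegral_add_left hF]
    rw [lintegral_congr_ae (hbnd.mono fun x hx => hpt x hx)]
    simp [lintegral_const]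
  have hI : ℙ {ω | |X ω - r ω| < τ} ≠ ⊤ := measure_ne_top _ _
  rw [h1] at hI
  have h4 : (∫⁻ x, F x ∂μX).toReal = τ := by
    have := congrArg ENNReal.toReal h3
    rw [← h2, ENNReal.toReal_add hI hI, ENNReal.toReal_ofReal (by linarith)] at this
    linarith
  rw [measure_congr hAE, h1, h4]
end

section
/- Let d ≥ 2, a uniform on S^{d−1} ⊂ ℝ^d, r independent uniform on [0,1], τ ∈ (0,1), and y ∈ ℝ^d with ‖y‖ ≤ 1 − τ. Then P(|⟨a, y⟩ − r| < τ) = τ. -/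
open MeasureTheory ProbabilityTheory
open scoped RealInnerProductSpace

private lemma vol_piece {τ z : ℝ} (hτ0 : 0 < τ) (hz : z ≤ 1 - τ) :
    (volume.restrict (Set.Icc (0 : ℝ) 1)) (Set.Ioo (z - τ) (z + τ)) =
      ENNReal.ofReal ((z + τ) - max (z - τ) 0) := by
  rw [Measure.restrict_apply measurableSet_Ioo]
  rcases le_or_gt 0 (z - τ) with h | h
  · have hsub : Set.Ioo (z - τ) (z + τ) ⊆ Set.Icc (0 : ℝ) 1 := by
      intro t ht
      exact ⟨le_trans h ht.1.le, le_trans ht.2.le (by linarith)⟩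
    rw [Set.inter_eq_left.mpr hsub, Real.volume_Ioo, max_eq_left h]
  · have : Set.Ioo (z - τ) (z + τ) ∩ Set.Icc (0 : ℝ) 1 = Set.Ico 0 (z + τ) := by
      ext t
      simp only [Set.mem_inter_iff, Set.mem_Ioo, Set.mem_Icc, Set.mem_Ico]
      constructor
      · rintro ⟨⟨_, h2⟩, h3, _⟩; exact ⟨h3, h2⟩
      · rintro ⟨h1, h2⟩; exact ⟨⟨by linarith, h2⟩, h1, by linarith⟩
    rw [this, Real.volume_Ico, max_eq_right h.le, sub_zero]

private lemma vol_pair {τ x : ℝ} (hτ0 : 0 < τ) (hx : |x| ≤ 1 - τ) :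
    (volume.restrict (Set.Icc (0 : ℝ) 1)) (Set.Ioo (x - τ) (x + τ)) +
      (volume.restrict (Set.Icc (0 : ℝ) 1)) (Set.Ioo (-x - τ) (-x + τ)) =
      ENNReal.ofReal (2 * τ) := by
  rw [abs_le] at hx
  rw [vol_piece hτ0 (by linarith), vol_piece hτ0 (by linarith)]
  rcases le_or_gt τ x with h | h
  · rw [max_eq_left (by linarith), max_eq_right (by linarith)]
    have : ENNReal.ofReal (-x + τ - 0) = 0 := by
      rw [ENNReal.ofReal_eq_zero]; linarith
    rw [this, add_zero]; ring_nf
  rcases le_or_gt x (-τ) with h' | h'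
  · rw [max_eq_right (by linarith), max_eq_left (by linarith)]
    have : ENNReal.ofReal (x + τ - 0) = 0 := by
      rw [ENNReal.ofReal_eq_zero]; linarith
    rw [this, zero_add]; ring_nf
  · rw [max_eq_right (by linarith), max_eq_right (by linarith)]
    rw [← ENNReal.ofReal_add (by linarith) (by linarith)]
    ring_nf

theorem stmt_9 {Ω : Type*} [MeasureSpace Ω] [IsProbabilityMeasure (ℙ : Measure Ω)]
    {d : ℕ} (hd : 2 ≤ d)
    (a : Ω → EuclideanSpace ℝ (Fin d)) (r : Ω → ℝ)
    (ha : Measurable a) (hr : Measurable r)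
    -- a is uniformly distributed on the unit sphere S^{d-1}:
    (hsphere : ∀ᵐ ω ∂ℙ, ‖a ω‖ = 1)
    (hrot : ∀ Q : EuclideanSpace ℝ (Fin d) ≃ₗᵢ[ℝ] EuclideanSpace ℝ (Fin d),
      Measure.map (fun ω => Q (a ω)) ℙ = Measure.map a ℙ)
    -- r is uniformly distributed on [0,1], independent of a:
    (hrlaw : Measure.map r ℙ = volume.restrict (Set.Icc (0 : ℝ) 1))
    (hindep : IndepFun a r ℙ)
    (τ : ℝ) (hτ0 : 0 < τ) (hτ1 : τ < 1)
    (y : EuclideanSpace ℝ (Fin d)) (hy : ‖y‖ ≤ 1 - τ) :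
    (ℙ {ω | |⟪a ω, y⟫ - r ω| < τ}).toReal = τ := by
  set ν : Measure ℝ := volume.restrict (Set.Icc (0 : ℝ) 1) with hν
  haveI : IsProbabilityMeasure ν := ⟨by simp [hν, Real.volume_Icc]⟩
  set g : EuclideanSpace ℝ (Fin d) → ℝ := fun v => ⟪v, y⟫ with hgdef
  have hg : Measurable g := (continuous_id.inner continuous_const).measurable
  set c : Ω → ℝ := fun ω => ⟪a ω, y⟫ with hcdef
  have hc : Measurable c := hg.comp ha
  set μ : Measure ℝ := Measure.map c ℙ with hμ
  haveI : IsProbabilityMeasure μ := Measure.isProbabilityMeasure_map hc.aemeasurable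
  -- independence of c and r
  have hcr : IndepFun c r ℙ := hindep.comp hg measurable_id
  have hmap : Measure.map (fun ω => (c ω, r ω)) ℙ = μ.prod ν := by
    rw [hμ, ← hrlaw]
    exact ((indepFun_iff_map_prod_eq_prod_map_map hc.aemeasurable hr.aemeasurable).mp hcr)
  -- the event as a set in the product
  set S : Set (ℝ × ℝ) := {p | |p.1 - p.2| < τ} with hS
  have hSmeas : MeasurableSet S := by
    have : IsOpen S := isOpen_lt (by fun_prop) continuous_const
    exact this.measurableSet
  have hpre : ∀ x : ℝ, Prod.mk x ⁻¹' S = Set.Ioo (x - τ) (x + τ) := by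
    intro x
    ext t
    simp only [Set.mem_preimage, hS, Set.mem_setOf_eq, Set.mem_Ioo, abs_sub_lt_iff]
    constructor <;> rintro ⟨h1, h2⟩ <;> constructor <;> linarith
  have hP : ℙ {ω | |⟪a ω, y⟫ - r ω| < τ} = ∫⁻ x, ν (Set.Ioo (x - τ) (x + τ)) ∂μ := by
    have h1 : {ω | |⟪a ω, y⟫ - r ω| < τ} = (fun ω => (c ω, r ω)) ⁻¹' S := rfl
    rw [h1, ← Measure.map_apply (hc.prodMk hr) hSmeas, hmap,
      Measure.prod_apply hSmeas]
    exact lintegral_congr fun x => by rw [hpre x]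
  -- measurability of the integrand
  have hF : Measurable fun x => ν (Set.Ioo (x - τ) (x + τ)) := by
    have : Measurable fun x => ν (Prod.mk x ⁻¹' S) := measurable_measure_prodMk_left hSmeas
    simpa only [hpre] using this
  -- symmetry of μ
  have hneg : Measure.map (fun x : ℝ => -x) μ = μ := by
    have hQ := hrot (LinearIsometryEquiv.neg ℝ)
    have hQa : Measurable fun ω => (LinearIsometryEquiv.neg ℝ) (a ω) :=
      (LinearIsometryEquiv.neg ℝ).continuous.measurable.comp ha
    have A := Measure.map_map (μ := (ℙ : Measure Ω)) hg hQa
    rw [hQ, Measure.map_map hg ha] at A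
    have e1 : g ∘ a = c := by funext ω; rfl
    have e2 : (g ∘ fun ω => (LinearIsometryEquiv.neg ℝ) (a ω)) = fun ω => -(c ω) := by
      funext ω
      simp [hgdef, hcdef, Function.comp, inner_neg_left]
    rw [e1, e2] at A
    have B : Measure.map (fun x : ℝ => -x) μ = Measure.map (fun ω => -(c ω)) ℙ := by
      rw [hμ, Measure.map_map measurable_neg hc]
      rfl
    rw [B, ← A, hμ]
  -- a.e. bound on μ
  have hbound : ∀ᵐ x ∂μ, |x| ≤ 1 - τ := by
    rw [hμ]
    rw [ae_map_iff hc.aemeasurable (measurableSet_le (by fun_prop) measurable_const)]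
    filter_upwards [hsphere] with ω hω
    calc |c ω| ≤ ‖a ω‖ * ‖y‖ := abs_real_inner_le_norm _ _
      _ ≤ 1 - τ := by rw [hω, one_mul]; exact hy
  -- main computation
  set I : ENNReal := ∫⁻ x, ν (Set.Ioo (x - τ) (x + τ)) ∂μ with hI
  have hIneg : I = ∫⁻ x, ν (Set.Ioo (-x - τ) (-x + τ)) ∂μ := by
    conv_lhs => rw [hI, ← hneg, lintegral_map hF measurable_neg]
  have h2I : 2 * I = ENNReal.ofReal (2 * τ) := by
    have : 2 * I = ∫⁻ x, (ν (Set.Ioo (x - τ) (x + τ)) + ν (Set.Ioo (-x - τ) (-x + τ))) ∂μ := by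
      rw [lintegral_add_left hF, ← hIneg, ← hI, two_mul]
    rw [this]
    rw [lintegral_congr_ae (by filter_upwards [hbound] with x hx; exact vol_pair hτ0 hx)]
    simp [measure_univ]
  have hIeq : I = ENNReal.ofReal τ := by
    have h2 : ENNReal.ofReal (2 * τ) = 2 * ENNReal.ofReal τ := by
      rw [ENNReal.ofReal_mul (by norm_num)]; norm_num
    rw [h2] at h2I
    exact (ENNReal.mul_right_inj (by norm_num) (by norm_num)).mp h2I
  rw [hP, hIeq, ENNReal.toReal_ofReal hτ0.le]
end

section
/- Let d = 2, τ = 1/2 and y ∈ ℝ^2 with ‖y‖ = 1 (so that 1 − τ < ‖y‖ ≤ 1), with a uniform on S^{d−1} and r independent uniform on [0,1]. Then P(|⟨a, y⟩ − r| < 1/2) differs from 1/2. -/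
open MeasureTheory ProbabilityTheory
open scoped RealInnerProductSpace

lemma key1 (x : ℝ) (hx : |x| ≤ 1) :
    max (min (x + 1/2) 1 - max (x - 1/2) 0) 0 + max (min (-x + 1/2) 1 - max (-x - 1/2) 0) 0 ≤ 1 := by
  rcases abs_le.mp hx with ⟨h1, h2⟩
  simp only [min_def, max_def]
  split_ifs <;> linarith

lemma key2a (x : ℝ) (hx : 7/10 ≤ x) :
    max (min (x + 1/2) 1 - max (x - 1/2) 0) 0 + max (min (-x + 1/2) 1 - max (-x - 1/2) 0) 0 ≤ 4/5 := by
  have e0 : max (x - 1/2) 0 = x - 1/2 := max_eq_left (by linarith)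
  have e1 : max (min (x + 1/2) 1 - max (x - 1/2) 0) 0 ≤ 4/5 := by
    refine max_le ?_ (by norm_num)
    have := min_le_right (x + 1/2) 1
    linarith
  have e2 : max (min (-x + 1/2) 1 - max (-x - 1/2) 0) 0 = 0 := by
    refine max_eq_right ?_
    have h1 := min_le_left (-x + 1/2) 1
    have h2 := le_max_right (-x - 1/2) 0
    linarith
  linarith

lemma key2 (x : ℝ) (hx : 7/10 ≤ |x|) :
    max (min (x + 1/2) 1 - max (x - 1/2) 0) 0 + max (min (-x + 1/2) 1 - max (-x - 1/2) 0) 0 ≤ 4/5 := by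
  rcases le_abs.mp hx with h | h
  · exact key2a x h
  · have := key2a (-x) h
    rw [neg_neg] at this
    linarith

noncomputable def rotL : EuclideanSpace ℝ (Fin 2) ≃ₗ[ℝ] EuclideanSpace ℝ (Fin 2) where
  toFun x := WithLp.toLp 2 ![-(x 1), x 0]
  invFun x := WithLp.toLp 2 ![x 1, -(x 0)]
  map_add' x y := by ext i; fin_cases i <;> simp <;> ring
  map_smul' c x := by ext i; fin_cases i <;> simp <;> ring
  left_inv x := by ext i; fin_cases i <;> simp
  right_inv x := by ext i; fin_cases i <;> simp

noncomputable def rot : EuclideanSpace ℝ (Fin 2) ≃ₗᵢ[ℝ] EuclideanSpace ℝ (Fin 2) :=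
  rotL.isometryOfInner (by
    intro x y
    simp [rotL, PiLp.inner_apply, Fin.sum_univ_two]
    ring)

lemma rot_apply (x : EuclideanSpace ℝ (Fin 2)) : rot x = WithLp.toLp 2 ![-(x 1), x 0] := rfl

lemma pythag (x y : EuclideanSpace ℝ (Fin 2)) :
    ⟪x, y⟫ ^ 2 + ⟪x, rot y⟫ ^ 2 = ‖x‖ ^ 2 * ‖y‖ ^ 2 := by
  have h1 : ‖x‖ ^ 2 = ⟪x, x⟫ := (real_inner_self_eq_norm_sq x).symm
  have h2 : ‖y‖ ^ 2 = ⟪y, y⟫ := (real_inner_self_eq_norm_sq y).symm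
  rw [h1, h2]
  simp [rot_apply, PiLp.inner_apply, Fin.sum_univ_two, EuclideanSpace.real_norm_sq_eq]
  ring

/-- Sharpness of the constraint `‖y‖ ≤ 1 - τ` in Theorem 1: for `d = 2`, `‖y‖ = 1` and
`τ = 1/2`, the probability `P(|⟪a, y⟫ - r| < 1/2)` is not equal to `1/2`. -/
theorem stmt_19 {Ω : Type*} [MeasureSpace Ω] [IsProbabilityMeasure (ℙ : Measure Ω)]
    (a : Ω → EuclideanSpace ℝ (Fin 2)) (r : Ω → ℝ)
    (ha : Measurable a) (hr : Measurable r)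
    (hsphere : ∀ᵐ ω ∂ℙ, ‖a ω‖ = 1)
    (hrot : ∀ Q : EuclideanSpace ℝ (Fin 2) ≃ₗᵢ[ℝ] EuclideanSpace ℝ (Fin 2),
      Measure.map (fun ω => Q (a ω)) ℙ = Measure.map a ℙ)
    (hrlaw : Measure.map r ℙ = volume.restrict (Set.Icc (0 : ℝ) 1))
    (hindep : IndepFun a r ℙ)
    (y : EuclideanSpace ℝ (Fin 2)) (hy : ‖y‖ = 1) :
    (ℙ {ω | |⟪a ω, y⟫ - r ω| < 1 / 2}).toReal ≠ 1 / 2 := by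
  set ν : Measure ℝ := volume.restrict (Set.Icc (0 : ℝ) 1) with hν
  set X : Ω → ℝ := fun ω => ⟪a ω, y⟫ with hXdef
  set Z : Ω → ℝ := fun ω => ⟪a ω, rot y⟫ with hZdef
  have hφ : Measurable (fun v : EuclideanSpace ℝ (Fin 2) => (⟪v, y⟫ : ℝ)) :=
    (continuous_id.inner continuous_const).measurable
  have hX : Measurable X := hφ.comp ha
  have hZ : Measurable Z :=
    ((continuous_id.inner continuous_const).measurable).comp ha
  set S : Set (ℝ × ℝ) := {p | |p.1 - p.2| < 1/2} with hSdef
  have hS : MeasurableSet S :=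
    (isOpen_lt ((continuous_fst.sub continuous_snd).abs) continuous_const).measurableSet
  set g : ℝ → ENNReal := fun x => ν (Prod.mk x ⁻¹' S) with hgdef
  have hg : Measurable g := measurable_measure_prodMk_left hS
  -- Step 1: P(S) = ∫ g(X)
  have hXr : IndepFun X r ℙ := hindep.comp hφ measurable_id
  have hmap : Measure.map (fun ω => (X ω, r ω)) ℙ = (Measure.map X ℙ).prod ν := by
    have h := (indepFun_iff_map_prod_eq_prod_map_map hX.aemeasurable hr.aemeasurable).mp hXr
    rw [hrlaw] at h
    exact h
  have hPS : ℙ {ω | |⟪a ω, y⟫ - r ω| < 1 / 2} = ∫⁻ ω, g (X ω) ∂ℙ := by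
    have h0 : {ω | |⟪a ω, y⟫ - r ω| < 1 / 2} = (fun ω => (X ω, r ω)) ⁻¹' S := rfl
    rw [h0, ← Measure.map_apply (hX.prodMk hr) hS, hmap, Measure.prod_apply hS,
      lintegral_map hg hX]
  -- Step 2: symmetry
  have hsym : ∫⁻ ω, g (-(X ω)) ∂ℙ = ∫⁻ ω, g (X ω) ∂ℙ := by
    have hF : Measurable (fun v : EuclideanSpace ℝ (Fin 2) => g (-⟪v, y⟫)) :=
      hg.comp ((continuous_id.inner continuous_const).neg).measurable
    obtain ⟨N, hNapp⟩ : ∃ N : EuclideanSpace ℝ (Fin 2) ≃ₗᵢ[ℝ] EuclideanSpace ℝ (Fin 2),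
        ∀ v : EuclideanSpace ℝ (Fin 2), N v = -v :=
      ⟨LinearIsometryEquiv.neg ℝ, fun _ => rfl⟩
    have hneg := hrot N
    calc ∫⁻ ω, g (-(X ω)) ∂ℙ
        = ∫⁻ v, g (-⟪v, y⟫) ∂(Measure.map a ℙ) := (lintegral_map hF ha).symm
      _ = ∫⁻ v, g (-⟪v, y⟫) ∂(Measure.map (fun ω => N (a ω)) ℙ) := by rw [hneg]
      _ = ∫⁻ ω, g (-⟪N (a ω), y⟫) ∂ℙ :=
          lintegral_map hF (N.continuous.measurable.comp ha)
      _ = ∫⁻ ω, g (X ω) ∂ℙ := by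
          simp only [hNapp, inner_neg_left, neg_neg]
          rfl
  -- bound on g
  have hgbound : ∀ x : ℝ,
      g x ≤ ENNReal.ofReal (max (min (x + 1/2) 1 - max (x - 1/2) 0) 0) := by
    intro x
    have h2 : g x = volume ({t : ℝ | |x - t| < 1/2} ∩ Set.Icc (0:ℝ) 1) :=
      Measure.restrict_apply' measurableSet_Icc
    have h3 : {t : ℝ | |x - t| < 1/2} ∩ Set.Icc (0:ℝ) 1
        ⊆ Set.Icc (max (x - 1/2) 0) (min (x + 1/2) 1) := by
      rintro t ⟨ht1, ht2, ht3⟩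
      rw [Set.mem_setOf_eq] at ht1
      have h4 := abs_lt.mp ht1
      exact ⟨max_le (by linarith [h4.2]) ht2, le_min (by linarith [h4.1]) ht3⟩
    calc g x ≤ volume (Set.Icc (max (x - 1/2) 0) (min (x + 1/2) 1)) := by
          rw [h2]; exact measure_mono h3
      _ = ENNReal.ofReal (min (x + 1/2) 1 - max (x - 1/2) 0) := Real.volume_Icc
      _ ≤ _ := ENNReal.ofReal_le_ofReal (le_max_left _ _)
  -- events
  set A : Set Ω := {ω | 7/10 ≤ |X ω|} with hAdef
  set B : Set Ω := {ω | 7/10 ≤ |Z ω|} with hBdef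
  have hAm : MeasurableSet A := measurableSet_le measurable_const hX.abs
  have hBm : MeasurableSet B := measurableSet_le measurable_const hZ.abs
  have hPBA : ℙ B = ℙ A := by
    have hsetm : MeasurableSet {v : EuclideanSpace ℝ (Fin 2) | 7/10 ≤ |⟪v, rot y⟫|} :=
      measurableSet_le measurable_const (continuous_id.inner continuous_const).measurable.abs
    have h1 : ℙ B = (Measure.map a ℙ) {v | 7/10 ≤ |⟪v, rot y⟫|} :=
      (Measure.map_apply ha hsetm).symm
    rw [← hrot rot, Measure.map_apply
      (show Measurable fun ω => rot (a ω) from rot.continuous.measurable.comp ha) hsetm] at h1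
    simp only [Set.preimage_setOf_eq, LinearIsometryEquiv.inner_map_map] at h1
    exact h1
  have hcov : ∀ᵐ ω ∂ℙ, ω ∈ A ∪ B := by
    filter_upwards [hsphere] with ω hω
    by_contra hc
    simp only [Set.mem_union, hAdef, hBdef, Set.mem_setOf_eq, not_or, not_le] at hc
    have hp := pythag (a ω) y
    rw [hω, hy] at hp
    nlinarith [sq_abs (X ω), sq_abs (Z ω), hc.1, hc.2, abs_nonneg (X ω), abs_nonneg (Z ω)]
  have hcov1 : (1 : ENNReal) ≤ ℙ A + ℙ A := by
    have h1 : ℙ (A ∪ B) = 1 := by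
      rw [← measure_univ (μ := (ℙ : Measure Ω))]
      exact measure_congr (Filter.eventuallyEq_univ.mpr hcov)
    calc (1 : ENNReal) = ℙ (A ∪ B) := h1.symm
      _ ≤ ℙ A + ℙ B := measure_union_le A B
      _ = ℙ A + ℙ A := by rw [hPBA]
  -- pointwise a.e. bound
  have hptwise : ∀ᵐ ω ∂ℙ,
      g (X ω) + g (-(X ω)) + A.indicator (fun _ => ENNReal.ofReal (1/5)) ω ≤ 1 := by
    filter_upwards [hsphere] with ω hω
    have hx1 : |X ω| ≤ 1 := by
      have h := abs_real_inner_le_norm (a ω) y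
      rw [hω, hy, one_mul] at h
      exact h
    have hb1 := hgbound (X ω)
    have hb2 := hgbound (-(X ω))
    set P := max (min (X ω + 1/2) 1 - max (X ω - 1/2) 0) 0 with hP
    set Q := max (min (-(X ω) + 1/2) 1 - max (-(X ω) - 1/2) 0) 0 with hQ
    have hPn : (0:ℝ) ≤ P := le_max_right _ _
    have hQn : (0:ℝ) ≤ Q := le_max_right _ _
    by_cases hA : ω ∈ A
    · have hkey : P + Q ≤ 4/5 := key2 (X ω) hA
      have hi : A.indicator (fun _ => ENNReal.ofReal (1/5)) ω = ENNReal.ofReal (1/5) :=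
        Set.indicator_of_mem hA _
      rw [hi]
      calc g (X ω) + g (-(X ω)) + ENNReal.ofReal (1/5)
          ≤ ENNReal.ofReal P + ENNReal.ofReal Q + ENNReal.ofReal (1/5) :=
            add_le_add (add_le_add hb1 hb2) le_rfl
        _ = ENNReal.ofReal (P + Q + 1/5) := by
            rw [← ENNReal.ofReal_add hPn hQn, ← ENNReal.ofReal_add (by linarith) (by norm_num)]
        _ ≤ ENNReal.ofReal 1 := ENNReal.ofReal_le_ofReal (by linarith)
        _ = 1 := ENNReal.ofReal_one
    · have hkey : P + Q ≤ 1 := key1 (X ω) hx1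
      have hi : A.indicator (fun _ => ENNReal.ofReal (1/5)) ω = 0 :=
        Set.indicator_of_notMem hA _
      rw [hi, add_zero]
      calc g (X ω) + g (-(X ω))
          ≤ ENNReal.ofReal P + ENNReal.ofReal Q := add_le_add hb1 hb2
        _ = ENNReal.ofReal (P + Q) := by rw [← ENNReal.ofReal_add hPn hQn]
        _ ≤ ENNReal.ofReal 1 := ENNReal.ofReal_le_ofReal hkey
        _ = 1 := ENNReal.ofReal_one
  -- integrate
  have hgnX : Measurable fun ω => g (-(X ω)) := hg.comp hX.neg
  have hind : Measurable (A.indicator (fun _ : Ω => ENNReal.ofReal (1/5))) :=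
    measurable_const.indicator hAm
  have E1 : ℙ {ω | |⟪a ω, y⟫ - r ω| < 1 / 2} + ℙ {ω | |⟪a ω, y⟫ - r ω| < 1 / 2}
      + ENNReal.ofReal (1/5) * ℙ A ≤ 1 := by
    have hle : ∫⁻ ω, (g (X ω) + g (-(X ω)) + A.indicator (fun _ => ENNReal.ofReal (1/5)) ω) ∂ℙ
        ≤ ∫⁻ _, (1 : ENNReal) ∂ℙ := lintegral_mono_ae hptwise
    rw [lintegral_add_right _ hind, lintegral_add_right _ hgnX, lintegral_one,
      measure_univ, hsym, lintegral_indicator_const hAm] at hle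
    rw [hPS]
    exact hle
  -- conclude
  intro hcontra
  have hfin : ℙ {ω | |⟪a ω, y⟫ - r ω| < 1 / 2} ≠ ⊤ := measure_ne_top _ _
  have hPSval : ℙ {ω | |⟪a ω, y⟫ - r ω| < 1 / 2} = ENNReal.ofReal (1/2) := by
    have h := ENNReal.ofReal_toReal hfin
    rw [hcontra] at h
    exact h.symm
  have hAfin : ℙ A ≠ ⊤ := measure_ne_top _ _
  have hp : (1:ℝ)/2 ≤ (ℙ A).toReal := by
    have h2 : ((1:ENNReal)).toReal ≤ (ℙ A + ℙ A).toReal :=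
      ENNReal.toReal_mono (by finiteness) hcov1
    rw [ENNReal.toReal_add hAfin hAfin] at h2
    simp at h2
    linarith
  have hAval : ℙ A = ENNReal.ofReal ((ℙ A).toReal) := (ENNReal.ofReal_toReal hAfin).symm
  rw [hPSval, hAval, ← ENNReal.ofReal_mul (by norm_num), ← ENNReal.ofReal_add (by norm_num)
    (by positivity), ← ENNReal.ofReal_add (by positivity) (by positivity),
    ← ENNReal.ofReal_one, ENNReal.ofReal_le_ofReal_iff (by norm_num)] at E1
  linarith
end
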